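/- Let $f : \mathbb{R}^n \to \mathbb{R}$ have $L$-Lipschitz gradient. Let $x, g, d \in \mathbb{R}^n$ with $d, g \neq 0$, and suppose: $\frac{d^T g}{\|d\| \|g\|} \leq -\beta$ for some $\beta > 0$; $\kappa_1 \|g\| \leq \|d\| \leq \kappa_2 \|g\|$ for constants $\kappa_1, \kappa_2 > 0$; and $\|\nabla f(x) - g\| \leq \kappa \alpha \|g\|$ for $\kappa > 0$ and step size $\alpha > 0$. If $\alpha \leq \frac{\beta(1-\theta)}{L\kappa_2/2 + \kappa}$ with $\theta \in (0,1)$, then $f(x + \alpha d) \leq f(x) + \alpha \theta\, d^T g$. -/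

import Mathlib

/-!
The descent lemma bounds `f (x + α • d)` by `f x + α ⟪∇f x, d⟫ + (L / 2) α² ‖d‖²`.
Replacing `∇f x` by `g` costs at most `κ α ‖g‖ ‖d‖`, and `‖d‖² ≤ κ₂ ‖g‖ ‖d‖`, so the total
error is `α² (L κ₂ / 2 + κ) ‖d‖ ‖g‖ ≤ α β (1 - θ) ‖d‖ ‖g‖` by the step-size bound; the angle
condition turns this into at most `-(1 - θ) α ⟪d, g⟫`.
-/

open scoped RealInnerProductSpace

section

variable {F : Type*} [NormedAddCommGroup F] [InnerProductSpace ℝ F]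

theorem real_inner_le_inner_add_norm_sub_mul_norm (a b d : F) :
    ⟪a, d⟫ ≤ ⟪b, d⟫ + ‖a - b‖ * ‖d‖ := by
  have := real_inner_le_norm (a - b) d
  rw [inner_sub_left] at this
  linarith

variable [CompleteSpace F]

theorem hasDerivAt_comp_add_smul {f : F → ℝ} {x s : F} {t : ℝ}
    (hf : DifferentiableAt ℝ f (x + t • s)) :
    HasDerivAt (fun t : ℝ => f (x + t • s)) ⟪gradient f (x + t • s), s⟫ t := by
  have hline : HasDerivAt (fun t : ℝ => x + t • s) s t := by
    simpa using ((hasDerivAt_id t).smul_const s).const_add x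
  exact hf.hasGradientAt.hasFDerivAt.comp_hasDerivAt t hline

theorem inner_gradient_sub_le_of_lipschitz {f : F → ℝ} {L : ℝ}
    (hLip : ∀ x y, ‖gradient f x - gradient f y‖ ≤ L * ‖x - y‖) (x s : F) {t : ℝ} (ht : 0 ≤ t) :
    ⟪gradient f (x + t • s) - gradient f x, s⟫ ≤ L * t * ‖s‖ ^ 2 :=
  calc ⟪gradient f (x + t • s) - gradient f x, s⟫
      ≤ ‖gradient f (x + t • s) - gradient f x‖ * ‖s‖ := real_inner_le_norm _ _
    _ ≤ L * ‖(x + t • s) - x‖ * ‖s‖ := by gcongr; exact hLip _ _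
    _ = L * t * ‖s‖ ^ 2 := by
      rw [add_sub_cancel_left, norm_smul, Real.norm_of_nonneg ht]; ring

theorem le_add_inner_gradient_add_sq_of_lipschitz {f : F → ℝ} {L : ℝ} (hf : Differentiable ℝ f)
    (hLip : ∀ x y, ‖gradient f x - gradient f y‖ ≤ L * ‖x - y‖) (x s : F) :
    f (x + s) ≤ f x + ⟪gradient f x, s⟫ + L / 2 * ‖s‖ ^ 2 := by
  -- The claim is `φ 1 ≤ φ 0`, and the Lipschitz bound makes `φ' ≤ 0` on `[0, 1]`.
  set φ : ℝ → ℝ := fun t => f (x + t • s) - t * ⟪gradient f x, s⟫ - L / 2 * t ^ 2 * ‖s‖ ^ 2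
  have hφ' : ∀ t, HasDerivAt φ
      (⟪gradient f (x + t • s), s⟫ - ⟪gradient f x, s⟫ - L * t * ‖s‖ ^ 2) t := by
    intro t
    have hlin : HasDerivAt (fun t : ℝ => t * ⟪gradient f x, s⟫) ⟪gradient f x, s⟫ t := by
      simpa using (hasDerivAt_id t).mul_const _
    have hquad : HasDerivAt (fun t : ℝ => L / 2 * t ^ 2 * ‖s‖ ^ 2) (L * t * ‖s‖ ^ 2) t := by
      refine (((hasDerivAt_pow 2 t).const_mul (L / 2)).mul_const (‖s‖ ^ 2)).congr_deriv ?_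
      push_cast; ring
    exact ((hasDerivAt_comp_add_smul (hf _)).sub hlin).sub hquad
  have hanti : AntitoneOn φ (Set.Icc 0 1) := by
    refine antitoneOn_of_hasDerivWithinAt_nonpos (convex_Icc 0 1)
      (fun t _ => (hφ' t).continuousAt.continuousWithinAt)
      (fun t _ => (hφ' t).hasDerivWithinAt) fun t ht => ?_
    rw [interior_Icc] at ht
    have := inner_gradient_sub_le_of_lipschitz hLip x s ht.1.le
    rw [inner_sub_left] at this
    linarith
  have h01 : φ 1 ≤ φ 0 := hanti (by norm_num) (by norm_num) zero_le_one
  simp only [φ, one_smul, one_pow, one_mul, mul_one, zero_smul, add_zero, zero_mul, ne_eq,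
    OfNat.ofNat_ne_zero, not_false_eq_true, zero_pow, mul_zero, sub_zero] at h01
  linarith

end

theorem stmt_9_general
    {n : ℕ} (f : EuclideanSpace ℝ (Fin n) → ℝ) (L : ℝ) (hL : 0 < L)
    (hdiff : Differentiable ℝ f)
    (hLip : ∀ x y, ‖gradient f x - gradient f y‖ ≤ L * ‖x - y‖)
    (x g d : EuclideanSpace ℝ (Fin n)) (α θ κ κ₂ β : ℝ)
    (hd : d ≠ 0) (hg : g ≠ 0)
    (hangle : ⟪d, g⟫ / (‖d‖ * ‖g‖) ≤ -β)
    (hκ₂ : 0 < κ₂)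
    (hnorm2 : ‖d‖ ≤ κ₂ * ‖g‖)
    (hκ : 0 < κ) (hα : 0 < α)
    (hacc : ‖gradient f x - g‖ ≤ κ * α * ‖g‖)
    (hθ1 : θ < 1)
    (hαsmall : α ≤ β * (1 - θ) / (L * κ₂ / 2 + κ)) :
    f (x + α • d) ≤ f x + α * θ * ⟪d, g⟫ := by
  have hdg : 0 < ‖d‖ * ‖g‖ := by positivity
  have hangle' : ⟪d, g⟫ ≤ -β * (‖d‖ * ‖g‖) := (div_le_iff₀ hdg).mp hangle
  have hα' : α * (L * κ₂ / 2 + κ) ≤ β * (1 - θ) := (le_div_iff₀ (by positivity)).mp hαsmall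
  have hgrad : ⟪gradient f x, d⟫ ≤ ⟪d, g⟫ + κ * α * ‖g‖ * ‖d‖ := by
    rw [← real_inner_comm d g]
    exact (real_inner_le_inner_add_norm_sub_mul_norm (gradient f x) g d).trans (by gcongr)
  have hdd : ‖d‖ ^ 2 ≤ κ₂ * ‖g‖ * ‖d‖ := by
    rw [sq]; exact mul_le_mul_of_nonneg_right hnorm2 (norm_nonneg d)
  calc f (x + α • d) ≤ f x + ⟪gradient f x, α • d⟫ + L / 2 * ‖α • d‖ ^ 2 :=
        le_add_inner_gradient_add_sq_of_lipschitz hdiff hLip x (α • d)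
    _ = f x + α * ⟪gradient f x, d⟫ + L / 2 * α ^ 2 * ‖d‖ ^ 2 := by
        rw [real_inner_smul_right, norm_smul, Real.norm_of_nonneg hα.le]; ring
    _ ≤ f x + α * (⟪d, g⟫ + κ * α * ‖g‖ * ‖d‖) + L / 2 * α ^ 2 * (κ₂ * ‖g‖ * ‖d‖) := by
        gcongr
    _ = f x + α * ⟪d, g⟫ + α * (α * (L * κ₂ / 2 + κ)) * (‖d‖ * ‖g‖) := by ring
    _ ≤ f x + α * ⟪d, g⟫ + α * (β * (1 - θ)) * (‖d‖ * ‖g‖) := by gcongr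
    _ ≤ f x + α * θ * ⟪d, g⟫ := by
        nlinarith [mul_le_mul_of_nonneg_left hangle' (mul_nonneg hα.le (sub_nonneg.mpr hθ1.le))]

/-- Lemma 3.2: sufficient decrease for a general descent direction. -/
theorem stmt_9
    {n : ℕ} (f : EuclideanSpace ℝ (Fin n) → ℝ) (L : ℝ) (hL : 0 < L)
    (hdiff : Differentiable ℝ f)
    (hLip : ∀ x y, ‖gradient f x - gradient f y‖ ≤ L * ‖x - y‖)
    (x g d : EuclideanSpace ℝ (Fin n)) (α θ κ κ₁ κ₂ β : ℝ)
    (hd : d ≠ 0) (hg : g ≠ 0)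
    (hβ : 0 < β) (hangle : ⟪d, g⟫ / (‖d‖ * ‖g‖) ≤ -β)
    (hκ₁ : 0 < κ₁) (hκ₂ : 0 < κ₂)
    (hnorm1 : κ₁ * ‖g‖ ≤ ‖d‖) (hnorm2 : ‖d‖ ≤ κ₂ * ‖g‖)
    (hκ : 0 < κ) (hα : 0 < α)
    (hacc : ‖gradient f x - g‖ ≤ κ * α * ‖g‖)
    (hθ0 : 0 < θ) (hθ1 : θ < 1)
    (hαsmall : α ≤ β * (1 - θ) / (L * κ₂ / 2 + κ)) :
    f (x + α • d) ≤ f x + α * θ * ⟪d, g⟫ :=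
  stmt_9_general f L hL hdiff hLip x g d α θ κ κ₂ β hd hg hangle hκ₂ hnorm2 hκ hα hacc hθ1 hαsmall
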